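/- arXiv:1505.05642 — 2 statements merged into one kernel-verified Lean document; each statement's English description precedes it below -/
import Mathlib

section
/- For every integer q ≥ 2, every unit α of Z_q, and every c ∈ S_2(q), the codeword (c, α, c + α·𝟏, c + 2α·𝟏, …, c + (q−1)α·𝟏) of the Z_q-Simplex code S_3(q) has Hamming weight 1 + (q − 1)(q + 1) = q^2; consequently the number of codewords of S_3(q) arising from pairs (α, c) with α a unit is exactly φ(q)·q^2, each of weight q^2, where φ is Euler's totient function. -/
/-- Hamming weight of a word over `ZMod q`: the number of nonzero coordinates. -/
def wt {q : ℕ} (l : List (ZMod q)) : ℕ := l.countP (fun x => decide (x ≠ 0))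

/-- The word `(c, α, c + α·𝟏, c + 2α·𝟏, …, c + (q−1)α·𝟏)`, where `𝟏` is the
all-ones vector of the same length as `c`. -/
def simplexWord (q : ℕ) (α : ZMod q) (c : List (ZMod q)) : List (ZMod q) :=
  c ++ α :: (List.range (q - 1)).flatMap (fun i => c.map (fun x => x + ((i + 1 : ℕ) : ZMod q) * α))

/-- The `ZMod q`-Simplex code `S_k(q)` of dimension `k`, as a set of words (lists):
`S_1(q) = ZMod q` (as length-1 words) and
`S_k(q) = {(c, α, c + α·𝟏, …, c + (q−1)α·𝟏) : c ∈ S_{k-1}(q), α ∈ ZMod q}`. -/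
def simplex (q : ℕ) : ℕ → Set (List (ZMod q))
  | 0 => {[]}
  | k + 1 => {w | ∃ c ∈ simplex q k, ∃ α : ZMod q, w = simplexWord q α c}

/-- The word `(α, c + α·𝟏, c + 2α·𝟏, …, c + (q−1)α·𝟏)`. -/
def macWord (q : ℕ) (α : ZMod q) (c : List (ZMod q)) : List (ZMod q) :=
  α :: (List.range (q - 1)).flatMap (fun i => c.map (fun x => x + ((i + 1 : ℕ) : ZMod q) * α))

/-- The `ZMod q`-MacDonald code `M_{k,k-1}(q)`, as a set of words:
`M_{k,k-1}(q) = {(α, c + α·𝟏, …, c + (q−1)α·𝟏) : α ∈ ZMod q, c ∈ S_{k-1}(q)}`. -/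
def macdonald (q k : ℕ) : Set (List (ZMod q)) :=
  {w | ∃ α : ZMod q, ∃ c ∈ simplex q (k - 1), w = macWord q α c}

/-!
Since `α` is a unit, for every coordinate `x` of `c` the column `x, x + α, …, x + (q − 1)α`
runs through all of `ZMod q` and so has exactly one zero. Hence the `q` translates
`c + iα·𝟏` together have weight `(q − 1)·|c|`, the extra coordinate `α` adds `1`, and
`|c| = q + 1` for `c ∈ S_2(q)`. For the count, `(α, c) ↦ (c, α, c + α·𝟏, …)` is injective on
words of a fixed length, so `|S_k(q)| = q^k` and the unit codewords number `φ(q)·q²`.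
-/

open Finset

namespace ZMod

variable {q : ℕ}

theorem sum_range_natCast [NeZero q] {M : Type*} [AddCommMonoid M] (f : ZMod q → M) :
    ∑ i ∈ range q, f i = ∑ a, f a :=
  sum_nbij' Nat.cast val (by simp) (by simp [val_lt]) (fun _ hi => val_cast_of_lt (mem_range.1 hi))
    (fun a _ => natCast_zmod_val a) (fun _ _ => rfl)

theorem card_affine_ne_zero [NeZero q] {α : ZMod q} (hα : IsUnit α) (x : ZMod q) :
    #{i ∈ range q | x + ((i : ℕ) : ZMod q) * α ≠ 0} = q - 1 := by
  let e : ZMod q ≃ ZMod q := (Units.mulRight hα.unit).trans (Equiv.addLeft x)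
  calc #{i ∈ range q | x + ((i : ℕ) : ZMod q) * α ≠ 0}
      = ∑ a : ZMod q, if e a ≠ 0 then 1 else 0 := by
        rw [card_filter, sum_range_natCast (fun a => if x + a * α ≠ 0 then 1 else 0)]
        rfl
    _ = #{b : ZMod q | b ≠ 0} := by rw [e.sum_comp (fun b => if b ≠ 0 then 1 else 0), card_filter]
    _ = q - 1 := by rw [filter_ne', card_erase_of_mem (mem_univ _), card_univ, ZMod.card]

theorem ncard_setOf_isUnit [NeZero q] : {α : ZMod q | IsUnit α}.ncard = q.totient := by
  rw [show {α : ZMod q | IsUnit α} = Set.range Units.val from rfl,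
    Set.ncard_range_of_injective Units.val_injective, Nat.card_eq_fintype_card,
    card_units_eq_totient]

end ZMod

section Weight

variable {q : ℕ}

@[simp] theorem wt_nil : wt ([] : List (ZMod q)) = 0 := rfl

@[simp] theorem wt_cons (x : ZMod q) (l : List (ZMod q)) :
    wt (x :: l) = wt l + if x ≠ 0 then 1 else 0 := by
  simp [wt, List.countP_cons]

@[simp] theorem wt_append (l l' : List (ZMod q)) : wt (l ++ l') = wt l + wt l' :=
  List.countP_append ..

theorem wt_flatMap_range (f : ℕ → List (ZMod q)) (n : ℕ) :
    wt ((List.range n).flatMap f) = ∑ i ∈ range n, wt (f i) := by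
  induction n with
  | zero => simp
  | succ n ih => simp [List.range_succ, sum_range_succ, ih]

theorem sum_wt_map_add_mul [NeZero q] {α : ZMod q} (hα : IsUnit α) (c : List (ZMod q)) :
    ∑ i ∈ range q, wt (c.map (· + (i : ZMod q) * α)) = (q - 1) * c.length := by
  induction c with
  | nil => simp
  | cons x l ih =>
    simp only [List.map_cons, wt_cons, sum_add_distrib, ih, ← card_filter,
      ZMod.card_affine_ne_zero hα, List.length_cons]
    ring

theorem wt_simplexWord (hq : 1 < q) {α : ZMod q} (hα : IsUnit α) (c : List (ZMod q)) :
    wt (simplexWord q α c) = 1 + (q - 1) * c.length := by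
  have : NeZero q := ⟨by omega⟩
  have : Nontrivial (ZMod q) := ZMod.nontrivial_iff.2 hq.ne'
  have h := sum_wt_map_add_mul hα c
  rw [show range q = range (q - 1 + 1) by rw [Nat.sub_add_cancel hq.le], sum_range_succ'] at h
  simp only [Nat.cast_zero, zero_mul, add_zero, List.map_id_fun', id_eq] at h
  simp only [simplexWord, wt_append, wt_cons, wt_flatMap_range, ne_eq, hα.ne_zero,
    not_false_eq_true, if_true]
  omega

end Weight

section Simplex

open Set

variable {q : ℕ}

theorem length_simplexWord [NeZero q] (α : ZMod q) (c : List (ZMod q)) :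
    (simplexWord q α c).length = q * c.length + 1 := by
  obtain ⟨n, rfl⟩ : ∃ n, q = n + 1 := ⟨q - 1, (Nat.sub_add_cancel NeZero.one_le).symm⟩
  simp [simplexWord, List.length_flatMap]
  ring

theorem simplexWord_inj {α α' : ZMod q} {c c' : List (ZMod q)} (h : c.length = c'.length) :
    simplexWord q α c = simplexWord q α' c' ↔ α = α' ∧ c = c' := by
  refine ⟨fun heq => ?_, by rintro ⟨rfl, rfl⟩; rfl⟩
  obtain ⟨rfl, htail⟩ := List.append_inj heq h
  exact ⟨(List.cons_eq_cons.1 htail).1, rfl⟩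

theorem ncard_image2_simplexWord (A : Set (ZMod q)) {S : Set (List (ZMod q))} {n : ℕ}
    (hS : ∀ c ∈ S, c.length = n) :
    (image2 (simplexWord q) A S).ncard = A.ncard * S.ncard := by
  rw [← image_uncurry_prod, InjOn.ncard_image, ncard_prod]
  rintro ⟨α, c⟩ ⟨-, hc⟩ ⟨α', c'⟩ ⟨-, hc'⟩ h
  obtain ⟨rfl, rfl⟩ := (simplexWord_inj (by rw [hS c hc, hS c' hc'])).1 h
  rfl

theorem simplex_succ (k : ℕ) : simplex q (k + 1) = image2 (simplexWord q) univ (simplex q k) := by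
  ext w
  exact ⟨fun ⟨c, hc, α, h⟩ => ⟨α, trivial, c, hc, h.symm⟩,
    fun ⟨α, _, c, hc, h⟩ => ⟨c, hc, α, h.symm⟩⟩

theorem length_of_mem_simplex [NeZero q] {k : ℕ} {c : List (ZMod q)} (hc : c ∈ simplex q k) :
    c.length = ∑ j ∈ Finset.range k, q ^ j := by
  induction k generalizing c with
  | zero => simp [show c = [] from hc]
  | succ k ih =>
    obtain ⟨c', hc', α, rfl⟩ := hc
    rw [length_simplexWord, ih hc', Finset.sum_range_succ', Finset.mul_sum]
    simp [pow_succ']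

theorem ncard_simplex [NeZero q] (k : ℕ) : (simplex q k).ncard = q ^ k := by
  induction k with
  | zero => simp [simplex]
  | succ k ih =>
    rw [simplex_succ, ncard_image2_simplexWord _ (fun _ => length_of_mem_simplex), ncard_univ,
      Nat.card_zmod, ih, pow_succ']

end Simplex

/-- For every unit `α` of `ZMod q` and every `c ∈ S_2(q)`, the codeword
`(c, α, c + α·𝟏, …, c + (q−1)α·𝟏)` of `S_3(q)` has Hamming weight
`1 + (q − 1)(q + 1) = q²`; consequently the number of codewords of `S_3(q)` arising
from pairs `(α, c)` with `α` a unit is exactly `φ(q)·q²`, each of weight `q²`. -/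
theorem simplex_three_unit_weight (q : ℕ) (hq : 2 ≤ q) :
    (∀ α : ZMod q, IsUnit α → ∀ c ∈ simplex q 2,
      wt (simplexWord q α c) = 1 + (q - 1) * (q + 1)) ∧
    1 + (q - 1) * (q + 1) = q ^ 2 ∧
    ({w | ∃ α : ZMod q, IsUnit α ∧ ∃ c ∈ simplex q 2, w = simplexWord q α c}).ncard
      = Nat.totient q * q ^ 2 := by
  have : NeZero q := ⟨by omega⟩
  refine ⟨fun α hα c hc => ?_, by zify [(by omega : 1 ≤ q)]; ring, ?_⟩
  · rw [wt_simplexWord hq hα, length_of_mem_simplex hc]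
    simp [Finset.sum_range_succ, add_comm]
  · have hset : {w | ∃ α : ZMod q, IsUnit α ∧ ∃ c ∈ simplex q 2, w = simplexWord q α c} =
        Set.image2 (simplexWord q) {α | IsUnit α} (simplex q 2) := by
      ext w
      simp [Set.image2, eq_comm]
    rw [hset, ncard_image2_simplexWord _ (fun _ => length_of_mem_simplex),
      ZMod.ncard_setOf_isUnit, ncard_simplex]
end

section
/- For every integer q ≥ 2, each codeword (c, 0, c, c, …, c) of the Z_q-Simplex code S_3(q) obtained with α = 0 has Hamming weight q·wt(c), and among these codewords (c ranging over S_2(q)) there are: exactly 1 of weight 0; exactly d·φ(d) of weight q(q − q/d + 1), for each divisor d of q with d ≠ 1 and d ≠ q; exactly q·φ(q) + q − 1 of weight q^2; and exactly q(q − 1) − Σ_{d | q, d ≠ 1} d·φ(d) of weight q(q + 1), where φ is Euler's totient function. -/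
/-! The codewords of `S₂(q)` are the words `(c, α, c + α, …, c + (q-1)α)`, so `wt` of such a
word counts the `j ∈ ZMod q` with `c + jα ≠ 0`, plus one if `α ≠ 0`. The equation `c + jα = 0`
has no solution unless `c ∈ ⟨α⟩`, and otherwise `q / ord α` solutions (a coset of the kernel of
`j ↦ jα`). Hence the weight is `0` or `q` for `α = 0`, `q - q / ord α + 1` for `α ≠ 0`,
`c ∈ ⟨α⟩`, and `q + 1` otherwise. Counting the pairs `(α, c)` in each class amounts to counting
elements of each order `d ∣ q` in the cyclic group `ZMod q`, of which there are `φ(d)`, each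
generating a subgroup of `d` elements. Appending `q - 1` copies of `c` multiplies the weight
by `q`. -/

open Finset AddSubgroup

lemma Nat.div_pos_of_dvd {q d : ℕ} (hq : 0 < q) (hd : d ∣ q) : 0 < q / d :=
  Nat.div_pos (Nat.le_of_dvd hq hd) (Nat.pos_of_dvd_of_pos hd hq)

lemma card_filter_prod_eq_sum {α β : Type*} [Fintype α] [Fintype β] (P : α → β → Prop)
    [∀ a b, Decidable (P a b)] :
    #{p : α × β | P p.1 p.2} = ∑ a, #{b | P a b} := by
  simp only [card_filter, Fintype.sum_prod_type]

lemma AddMonoidHom.card_fiber_mul_card_range {G H : Type*} [AddGroup G] [Fintype G] [AddGroup H]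
    [DecidableEq H] (f : G →+ H) {y : H} (hy : y ∈ Set.range f) :
    #{g | f g = y} * Nat.card f.range = Fintype.card G := by
  rw [card_fiber_eq_of_mem_range f hy ⟨0, map_zero f⟩, ← AddSubgroup.index_ker,
    ← Nat.card_eq_fintype_card, ← f.ker.card_mul_index, Nat.card_eq_fintype_card,
    Fintype.card_subtype]
  simp [AddMonoidHom.mem_ker]

namespace IsAddCyclic

variable {G : Type*} [AddGroup G] [Fintype G] [IsAddCyclic G]

lemma sum_addOrderOf_filter (P : ℕ → Prop) [DecidablePred P] :
    ∑ a : G with P (addOrderOf a), addOrderOf a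
      = ∑ d ∈ (Fintype.card G).divisors with P d, d * d.totient := by
  rw [← sum_fiberwise_of_maps_to (g := addOrderOf) (t := (Fintype.card G).divisors.filter P)]
  · refine sum_congr rfl fun d hd => ?_
    rw [filter_filter, sum_congr rfl fun a ha => (mem_filter.1 ha).2.2, sum_const, smul_eq_mul,
      mul_comm]
    obtain ⟨⟨hdG, -⟩, hPd⟩ := mem_filter.1 hd |>.imp_left Nat.mem_divisors.1
    rw [← card_addOrderOf_eq_totient hdG]
    congr 2
    exact filter_congr fun a _ => ⟨And.right, fun had => ⟨had ▸ hPd, had⟩⟩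
  · intro a ha
    simp only [mem_filter, Nat.mem_divisors] at ha ⊢
    exact ⟨⟨addOrderOf_dvd_card, Fintype.card_ne_zero⟩, ha.2⟩

lemma card_filter_addOrderOf_mem_zmultiples (P : ℕ → Prop) [DecidablePred P] :
    #{p : G × G | P (addOrderOf p.1) ∧ p.2 ∈ zmultiples p.1}
      = ∑ d ∈ (Fintype.card G).divisors with P d, d * d.totient := by
  rw [card_filter_prod_eq_sum (fun a b => P (addOrderOf a) ∧ b ∈ zmultiples a),
    ← sum_addOrderOf_filter, sum_filter]
  refine sum_congr rfl fun a _ => ?_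
  split_ifs with h
  · simp only [h, true_and]
    rw [← Nat.card_zmultiples, ← Fintype.card_subtype, Nat.card_eq_fintype_card]
  · simp [h]

end IsAddCyclic

namespace ZMod

variable {q : ℕ}

lemma addOrderOf_dvd (α : ZMod q) : addOrderOf α ∣ q := by
  simpa using addOrderOf_dvd_natCard α

lemma range_mulRight (α : ZMod q) : (AddMonoidHom.mulRight α).range = zmultiples α := by
  ext x
  simp only [AddMonoidHom.mem_range, AddMonoidHom.coe_mulRight, mem_zmultiples_iff, zsmul_eq_mul]
  exact ⟨fun ⟨j, hj⟩ => ⟨j.cast, by simpa using hj⟩, fun ⟨k, hk⟩ => ⟨k, hk⟩⟩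

lemma card_filter_range_natCast [NeZero q] (P : ZMod q → Prop) [DecidablePred P] :
    #{j ∈ range q | P (j : ℕ)} = #{x | P x} := by
  refine card_nbij' (fun j : ℕ => (j : ZMod q)) val (fun j hj => ?_) (fun x hx => ?_)
    (fun j hj => ?_) (fun x _ => natCast_zmod_val x)
  all_goals simp_all [val_lt]
  exact Nat.mod_eq_of_lt hj.1

lemma card_add_mul_eq_zero [NeZero q] (c α : ZMod q) :
    #{j | c + j * α = 0} = if c ∈ zmultiples α then q / addOrderOf α else 0 := by
  have hfiber : ∀ j, c + j * α = 0 ↔ AddMonoidHom.mulRight α j = -c := fun j => by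
    rw [AddMonoidHom.mulRight_apply, eq_neg_iff_add_eq_zero, add_comm]
  simp_rw [hfiber]
  split_ifs with hc
  · have hrange : -c ∈ Set.range (AddMonoidHom.mulRight α) := by
      rw [← AddMonoidHom.coe_range, range_mulRight]; exact neg_mem hc
    have := (AddMonoidHom.mulRight α).card_fiber_mul_card_range hrange
    rw [range_mulRight, Nat.card_zmultiples, card] at this
    exact (Nat.div_eq_of_eq_mul_left (addOrderOf_pos α) this.symm).symm
  · rw [card_eq_zero, filter_eq_empty_iff]
    rintro j - hj
    refine hc (neg_neg c ▸ neg_mem ?_)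
    rw [← range_mulRight]; exact ⟨j, hj⟩

end ZMod

section SimplexWords

variable {q : ℕ}

lemma wt_map_range (n : ℕ) (f : ℕ → ZMod q) :
    wt ((List.range n).map f) = #{j ∈ range n | f j ≠ 0} := by
  rw [← Nat.count_eq_card_filter_range, Nat.count, wt, List.countP_map]
  rfl

lemma simplexWord_nil (α : ZMod q) : simplexWord q α [] = [α] := by
  simp [simplexWord]

lemma simplexWord_singleton (α c : ZMod q) :
    simplexWord q α [c]
      = c :: α :: (List.range (q - 1)).map (fun i => c + ((i + 1 : ℕ) : ZMod q) * α) := by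
  simp [simplexWord, ← List.map_eq_flatMap]

lemma simplexWord_singleton_injective :
    Function.Injective (fun p : ZMod q × ZMod q => simplexWord q p.1 [p.2]) := by
  rintro ⟨α, c⟩ ⟨α', c'⟩ h
  simp_all [simplexWord_singleton]

lemma simplex_two_eq_range :
    simplex q 2 = Set.range (fun p : ZMod q × ZMod q => simplexWord q p.1 [p.2]) := by
  ext w
  constructor
  · rintro ⟨c, ⟨_, rfl, a, rfl⟩, α, rfl⟩
    exact ⟨(α, a), by rw [simplexWord_nil]⟩
  · rintro ⟨⟨α, c⟩, rfl⟩
    exact ⟨[c], ⟨[], rfl, c, (simplexWord_nil c).symm⟩, α, rfl⟩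

variable [NeZero q]

lemma wt_simplexWord_zero (c : List (ZMod q)) : wt (simplexWord q 0 c) = q * wt c := by
  obtain ⟨n, rfl⟩ : ∃ n, q = n + 1 := ⟨q - 1, by have := NeZero.pos q; omega⟩
  simp [simplexWord, wt, List.countP_flatMap, Function.comp_def]
  ring

lemma ncard_simplex_two_wt_eq_mul (k : ℕ) :
    {c ∈ simplex q 2 | wt (simplexWord q 0 c) = q * k}.ncard
      = #{p : ZMod q × ZMod q | wt (simplexWord q p.1 [p.2]) = k} := by
  rw [simplex_two_eq_range, ← Set.ncard_coe_finset, coe_filter,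
    ← Set.ncard_image_of_injective _ simplexWord_singleton_injective]
  congr 1
  ext w
  simp only [Set.mem_ofPred_eq, Set.mem_image, Set.mem_range, wt_simplexWord_zero,
    mul_right_inj' (NeZero.ne q), mem_univ, true_and]
  exact ⟨fun ⟨⟨p, hp⟩, hk⟩ => ⟨p, hp ▸ hk, hp⟩, fun ⟨p, hk, hp⟩ => ⟨⟨p, hp⟩, hp ▸ hk⟩⟩

lemma simplexWord_singleton_perm (α c : ZMod q) :
    (simplexWord q α [c]).Perm (α :: (List.range q).map fun j : ℕ => c + (j : ZMod q) * α) := by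
  obtain ⟨n, rfl⟩ : ∃ n, q = n + 1 := ⟨q - 1, by have := NeZero.pos q; omega⟩
  rw [simplexWord_singleton, List.range_succ_eq_map]
  simpa [Function.comp_def] using List.Perm.swap α c _

lemma wt_simplexWord_singleton (α c : ZMod q) :
    wt (simplexWord q α [c])
      = (if c ∈ zmultiples α then q - q / addOrderOf α else q) + if α = 0 then 0 else 1 := by
  have hzeros := card_filter_add_card_filter_not (s := univ) (fun j : ZMod q => c + j * α = 0)
  rw [ZMod.card_add_mul_eq_zero, card_univ, ZMod.card,
    ← ZMod.card_filter_range_natCast (fun j => ¬c + j * α = 0)] at hzeros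
  rw [wt, (simplexWord_singleton_perm α c).countP_eq, List.countP_cons, ← wt, wt_map_range]
  simp only [ne_eq, decide_not, Bool.not_eq_eq_eq_not, Bool.not_true, decide_eq_false_iff_not]
  split_ifs at hzeros ⊢ <;> omega

lemma wt_simplexWord_zero_singleton (c : ZMod q) :
    wt (simplexWord q 0 [c]) = if c = 0 then 0 else q := by
  by_cases hc : c = 0 <;> simp [wt_simplexWord_singleton, hc]

lemma wt_simplexWord_singleton_of_mem {α c : ZMod q} (hα : α ≠ 0) (hc : c ∈ zmultiples α) :
    wt (simplexWord q α [c]) = q - q / addOrderOf α + 1 := by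
  simp [wt_simplexWord_singleton, hα, hc]

lemma wt_simplexWord_singleton_of_notMem {α c : ZMod q} (hα : α ≠ 0) (hc : c ∉ zmultiples α) :
    wt (simplexWord q α [c]) = q + 1 := by
  simp [wt_simplexWord_singleton, hα, hc]

lemma wt_simplexWord_singleton_eq_zero_iff (α c : ZMod q) :
    wt (simplexWord q α [c]) = 0 ↔ α = 0 ∧ c = 0 := by
  rcases eq_or_ne α 0 with rfl | hα
  · simp [wt_simplexWord_zero_singleton, NeZero.ne q]
  by_cases hc : c ∈ zmultiples α
  · simp [wt_simplexWord_singleton_of_mem hα hc, hα]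
  · simp [wt_simplexWord_singleton_of_notMem hα hc, hα]

lemma wt_simplexWord_singleton_eq_sub_div_add_one_iff {d : ℕ} (hd : d ∣ q) (hd1 : d ≠ 1)
    (hdq : d ≠ q) (α c : ZMod q) :
    wt (simplexWord q α [c]) = q - q / d + 1 ↔ addOrderOf α = d ∧ c ∈ zmultiples α := by
  have hqd : q / d ≠ 1 := by
    rwa [← Nat.div_self (NeZero.pos q), Ne, Nat.div_eq_iff_eq_of_dvd_dvd (NeZero.ne q) hd dvd_rfl]
  have := Nat.div_pos_of_dvd (NeZero.pos q) hd
  have := Nat.div_le_self q d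
  rcases eq_or_ne α 0 with rfl | hα
  · rcases eq_or_ne c 0 with rfl | hc
    · simp [wt_simplexWord_zero_singleton, Ne.symm hd1]
    · simp [wt_simplexWord_zero_singleton, hc, Ne.symm hd1]
      omega
  by_cases hc : c ∈ zmultiples α
  · have := Nat.div_le_self q (addOrderOf α)
    rw [wt_simplexWord_singleton_of_mem hα hc, ← Nat.div_eq_iff_eq_of_dvd_dvd (NeZero.ne q)
      α.addOrderOf_dvd hd]
    simp only [hc, and_true]
    omega
  · simp only [wt_simplexWord_singleton_of_notMem hα hc, hc, and_false, iff_false]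
    omega

lemma wt_simplexWord_singleton_eq_self_iff (hq : 2 ≤ q) (α c : ZMod q) :
    wt (simplexWord q α [c]) = q ↔ α = 0 ∧ c ≠ 0 ∨ addOrderOf α = q ∧ c ∈ zmultiples α := by
  rcases eq_or_ne α 0 with rfl | hα
  · rcases eq_or_ne c 0 with rfl | hc
    · simp [wt_simplexWord_zero_singleton]
      omega
    · simp [wt_simplexWord_zero_singleton, hc]
  by_cases hc : c ∈ zmultiples α
  · have := Nat.div_pos_of_dvd (NeZero.pos q) α.addOrderOf_dvd
    have := Nat.div_le_self q (addOrderOf α)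
    rw [wt_simplexWord_singleton_of_mem hα hc, ← Nat.div_eq_iff_eq_of_dvd_dvd (NeZero.ne q)
      α.addOrderOf_dvd dvd_rfl, Nat.div_self (NeZero.pos q)]
    simp only [hα, hc, false_and, and_true, false_or]
    omega
  · simp [wt_simplexWord_singleton_of_notMem hα hc, hα, hc]

lemma wt_simplexWord_singleton_eq_add_one_iff (α c : ZMod q) :
    wt (simplexWord q α [c]) = q + 1 ↔ α ≠ 0 ∧ c ∉ zmultiples α := by
  rcases eq_or_ne α 0 with rfl | hα
  · simp only [wt_simplexWord_zero_singleton]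
    split_ifs <;> simp
  by_cases hc : c ∈ zmultiples α
  · have := Nat.div_pos_of_dvd (NeZero.pos q) α.addOrderOf_dvd
    have := NeZero.pos q
    simp only [wt_simplexWord_singleton_of_mem hα hc, hc, not_true, and_false, iff_false]
    omega
  · simp [wt_simplexWord_singleton_of_notMem hα hc, hα, hc]

lemma card_wt_simplexWord_singleton_eq_zero :
    #{p : ZMod q × ZMod q | wt (simplexWord q p.1 [p.2]) = 0} = 1 := by
  simp_rw [wt_simplexWord_singleton_eq_zero_iff, ← Prod.mk_eq_zero, filter_eq', mem_univ, if_true,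
    card_singleton]

lemma card_wt_simplexWord_singleton_eq_sub_div_add_one {d : ℕ} (hd : d ∣ q) (hd1 : d ≠ 1)
    (hdq : d ≠ q) :
    #{p : ZMod q × ZMod q | wt (simplexWord q p.1 [p.2]) = q - q / d + 1} = d * d.totient := by
  simp_rw [wt_simplexWord_singleton_eq_sub_div_add_one_iff hd hd1 hdq]
  rw [IsAddCyclic.card_filter_addOrderOf_mem_zmultiples (· = d), ZMod.card, filter_eq',
    if_pos (Nat.mem_divisors.2 ⟨hd, NeZero.ne q⟩), sum_singleton]

lemma card_wt_simplexWord_singleton_eq_self (hq : 2 ≤ q) :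
    #{p : ZMod q × ZMod q | wt (simplexWord q p.1 [p.2]) = q} = q * q.totient + q - 1 := by
  simp_rw [wt_simplexWord_singleton_eq_self_iff hq]
  rw [filter_or, card_union_of_disjoint]
  · have hzero : #{p : ZMod q × ZMod q | p.1 = 0 ∧ p.2 ≠ 0} = q - 1 := by
      rw [← univ_product_univ, filter_product (p := (· = 0)) (q := (· ≠ 0)), card_product,
        filter_eq', filter_ne', if_pos (mem_univ _), card_singleton, card_erase_of_mem (mem_univ _),
        card_univ, ZMod.card, one_mul]
    rw [hzero, IsAddCyclic.card_filter_addOrderOf_mem_zmultiples (· = q), ZMod.card, filter_eq',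
      if_pos (Nat.mem_divisors_self q (NeZero.ne q)), sum_singleton]
    have := NeZero.pos q
    omega
  · refine disjoint_filter.2 fun p _ hp hp' => ?_
    rw [hp.1, addOrderOf_zero] at hp'
    omega

lemma card_wt_simplexWord_singleton_eq_add_one :
    #{p : ZMod q × ZMod q | wt (simplexWord q p.1 [p.2]) = q + 1}
      = q * (q - 1) - ∑ d ∈ q.divisors with d ≠ 1, d * d.totient := by
  simp_rw [wt_simplexWord_singleton_eq_add_one_iff]
  have hsplit := card_filter_add_card_filter_not (s := {p : ZMod q × ZMod q | p.1 ≠ 0})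
    (fun p => p.2 ∈ zmultiples p.1)
  rw [filter_filter, filter_filter] at hsplit
  have hmem : #{p : ZMod q × ZMod q | p.1 ≠ 0 ∧ p.2 ∈ zmultiples p.1}
      = ∑ d ∈ q.divisors with d ≠ 1, d * d.totient := by
    have := IsAddCyclic.card_filter_addOrderOf_mem_zmultiples (G := ZMod q) (· ≠ 1)
    rw [ZMod.card] at this
    rw [← this]
    simp_rw [Ne, AddMonoid.addOrderOf_eq_one_iff]
  have hcard : #{p : ZMod q × ZMod q | p.1 ≠ 0} = q * (q - 1) := by
    rw [← univ_product_univ, filter_product_left (· ≠ (0 : ZMod q)), card_product, filter_ne',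
      card_erase_of_mem (mem_univ _), card_univ, ZMod.card, mul_comm]
  omega

end SimplexWords

/-- Each codeword `(c, 0, c, …, c)` of `S_3(q)` (with `α = 0`) has Hamming weight
`q·wt(c)`, and among these codewords, as `c` ranges over `S_2(q)`: exactly 1 has
weight 0, exactly `d·φ(d)` have weight `q(q − q/d + 1)` for each divisor `d` of `q`
with `d ≠ 1, d ≠ q`, exactly `q·φ(q) + q − 1` have weight `q²`, and exactly
`q(q − 1) − Σ_{d ∣ q, d ≠ 1} d·φ(d)` have weight `q(q + 1)`. -/
theorem simplex_three_alpha_zero_distribution (q : ℕ) (hq : 2 ≤ q) :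
    (∀ c ∈ simplex q 2, wt (simplexWord q 0 c) = q * wt c) ∧
    ({c ∈ simplex q 2 | wt (simplexWord q 0 c) = 0}).ncard = 1 ∧
    (∀ d : ℕ, d ∣ q → d ≠ 1 → d ≠ q →
      ({c ∈ simplex q 2 | wt (simplexWord q 0 c) = q * (q - q / d + 1)}).ncard
        = d * Nat.totient d) ∧
    ({c ∈ simplex q 2 | wt (simplexWord q 0 c) = q ^ 2}).ncard
      = q * Nat.totient q + q - 1 ∧
    ({c ∈ simplex q 2 | wt (simplexWord q 0 c) = q * (q + 1)}).ncard
      = q * (q - 1) - ∑ d ∈ q.divisors.filter (fun d => d ≠ 1), d * Nat.totient d := by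
  have : NeZero q := ⟨by omega⟩
  refine ⟨fun c _ => wt_simplexWord_zero c, ?_, fun d hd hd1 hdq => ?_, ?_, ?_⟩
  · rw [← mul_zero q, ncard_simplex_two_wt_eq_mul, card_wt_simplexWord_singleton_eq_zero]
  · rw [ncard_simplex_two_wt_eq_mul, card_wt_simplexWord_singleton_eq_sub_div_add_one hd hd1 hdq]
  · rw [sq, ncard_simplex_two_wt_eq_mul, card_wt_simplexWord_singleton_eq_self hq]
  · rw [ncard_simplex_two_wt_eq_mul, card_wt_simplexWord_singleton_eq_add_one]
end
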